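/- Let p ≠ q be odd primes, k ≥ 1 and n ≥ 1, and let B be a p^k-form of rank n with mod-p reduction B_red and reduction homomorphism π : O(B) → O(B_red). Then for every Sylow q-subgroup S of O(B), the restriction of π to S is injective and the image π(S) is a Sylow q-subgroup of O(B_red). -/

import Mathlib

open Matrix

variable {ι : Type*} [Fintype ι] [DecidableEq ι] {R : Type*} [CommRing R]

/-- The orthogonal group of a bilinear form given by the matrix `B`:
the subgroup of invertible matrices `A` with `Aᵀ * B * A = B`. -/
def OGroup (B : Matrix ι ι R) : Subgroup (Matrix ι ι R)ˣ where
  carrier := {A | ((A : (Matrix ι ι R)ˣ) : Matrix ι ι R)ᵀ * B * A = B}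
  one_mem' := by simp
  mul_mem' := by
    intro a b ha hb
    simp only [Set.mem_setOf_eq, Units.val_mul, Matrix.transpose_mul] at *
    calc ((b : Matrix ι ι R)ᵀ * (a : Matrix ι ι R)ᵀ) * B * ((a : Matrix ι ι R) * (b : Matrix ι ι R))
        = (b : Matrix ι ι R)ᵀ * ((a : Matrix ι ι R)ᵀ * B * (a : Matrix ι ι R)) * (b : Matrix ι ι R) := by
          simp only [Matrix.mul_assoc]
      _ = B := by rw [ha]; exact hb
  inv_mem' := by
    intro a ha
    simp only [Set.mem_setOf_eq] at *
    have h1 : ((a⁻¹ : (Matrix ι ι R)ˣ) : Matrix ι ι R)ᵀ * ((a : Matrix ι ι R)ᵀ * B * (a : Matrix ι ι R)) * ((a⁻¹ : (Matrix ι ι R)ˣ) : Matrix ι ι R) = B := by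
      calc ((a⁻¹ : (Matrix ι ι R)ˣ) : Matrix ι ι R)ᵀ * ((a : Matrix ι ι R)ᵀ * B * (a : Matrix ι ι R)) * ((a⁻¹ : (Matrix ι ι R)ˣ) : Matrix ι ι R)
          = ((a : Matrix ι ι R) * ((a⁻¹ : (Matrix ι ι R)ˣ) : Matrix ι ι R))ᵀ * B * ((a : Matrix ι ι R) * ((a⁻¹ : (Matrix ι ι R)ˣ) : Matrix ι ι R)) := by
            simp only [Matrix.transpose_mul, Matrix.mul_assoc]
        _ = B := by
            rw [← Units.val_mul, mul_inv_cancel]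
            simp
    rw [ha] at h1
    exact h1

lemma mem_OGroup_map {S : Type*} [CommRing S] (g : R →+* S)
    (B : Matrix ι ι R) (x : (Matrix ι ι R)ˣ) (hx : x ∈ OGroup B) :
    Units.map (g.mapMatrix : Matrix ι ι R →+* Matrix ι ι S).toMonoidHom x ∈
      OGroup (B.map g) := by
  have hx' : ((x : Matrix ι ι R))ᵀ * B * (x : Matrix ι ι R) = B := hx
  have h2 : ((x : Matrix ι ι R)ᵀ * B * (x : Matrix ι ι R)).map g = B.map g := by rw [hx']
  show (((x : Matrix ι ι R).map g)ᵀ) * B.map g * ((x : Matrix ι ι R).map g) = B.map g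
  rw [← Matrix.transpose_map, ← Matrix.map_mul, ← Matrix.map_mul]
  exact h2

/-- Mod-`p` reduction homomorphism `O(B) → O(B_red)`. -/
def redPi (p k : ℕ) (hk : k ≠ 0) {n : ℕ} (B : Matrix (Fin n) (Fin n) (ZMod (p ^ k))) :
    OGroup B →* OGroup (B.map (ZMod.castHom (dvd_pow_self p hk) (ZMod p))) :=
  MonoidHom.codRestrict
    ((Units.map ((ZMod.castHom (dvd_pow_self p hk) (ZMod p)).mapMatrix :
        Matrix (Fin n) (Fin n) (ZMod (p ^ k)) →+* Matrix (Fin n) (Fin n) (ZMod p)).toMonoidHom).comp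
      (OGroup B).subtype)
    (OGroup (B.map (ZMod.castHom (dvd_pow_self p hk) (ZMod p))))
    (fun x => mem_OGroup_map _ B x x.2)

/-! A matrix reducing to `1` modulo `p` has the form `1 + p N`, and `(1 + p N) ^ p ^ (k - 1) = 1`
over `ℤ/p^kℤ`. So the kernel of reduction is a `p`-group and meets every `q`-subgroup trivially.

Reduction is surjective by Hensel lifting. If `Aᵀ B A = B + d E`, then `d E` is symmetric, and,
as `2` and `B` are invertible, `X = -(1/2) B⁻¹ E` gives `(A (1 + d X))ᵀ B (A (1 + d X)) ≡ B`
modulo `d²`. Starting from any lift of an isometry modulo `p` and repeating this step reaches an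
isometry modulo `p^k`. Finally, a surjective homomorphism maps Sylow subgroups onto Sylow
subgroups. -/

theorem ZMod.ker_castHom {m n : ℕ} (h : m ∣ n) :
    RingHom.ker (castHom h (ZMod m)) = Ideal.span {(m : ZMod n)} := by
  ext x
  obtain ⟨a, rfl⟩ := ZMod.intCast_surjective x
  rw [RingHom.mem_ker, map_intCast, ZMod.intCast_zmod_eq_zero_iff_dvd, Ideal.mem_span_singleton]
  constructor
  · rintro ⟨b, rfl⟩
    exact ⟨b, by push_cast; rfl⟩
  · rintro ⟨y, hy⟩
    obtain ⟨b, rfl⟩ := ZMod.intCast_surjective y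
    rw [← Int.cast_natCast, ← Int.cast_mul, ZMod.intCast_eq_intCast_iff_dvd_sub] at hy
    have := (Int.natCast_dvd_natCast.mpr h).trans hy
    simpa using dvd_sub (dvd_mul_right _ b) this

section

variable {T : Type*} [Ring T] {p : ℕ}

theorem exists_one_add_pow_mul_pow_prime (hp : p.Prime) (x : T) {i : ℕ} (hi : 1 ≤ i) :
    ∃ y, (1 + (p : T) ^ i * x) ^ p = 1 + (p : T) ^ (i + 1) * y := by
  obtain ⟨r, hr⟩ := (Commute.one_left ((p : T) ^ i * x)).exists_add_pow_prime_eq hp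
  obtain ⟨m, hm⟩ : ∃ m, i * p = (i + 1) + m :=
    Nat.exists_eq_add_of_le (by nlinarith [hp.two_le])
  refine ⟨(p : T) ^ m * x ^ p + x * r, ?_⟩
  rw [hr, one_pow, ((Nat.cast_commute p x).pow_left i).mul_pow, ← pow_mul, hm, pow_add,
    mul_add, mul_one, pow_succ']
  simp only [mul_assoc, add_assoc]

theorem exists_one_add_mul_pow_prime_pow (hp : p.Prime) (x : T) (e : ℕ) :
    ∃ y, (1 + (p : T) * x) ^ p ^ e = 1 + (p : T) ^ (e + 1) * y := by
  induction e with
  | zero => exact ⟨x, by simp⟩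
  | succ e ih =>
    obtain ⟨y, hy⟩ := ih
    obtain ⟨z, hz⟩ := exists_one_add_pow_mul_pow_prime hp y (Nat.le_add_left 1 e)
    exact ⟨z, by rw [pow_succ, pow_mul, hy, hz]⟩

theorem one_add_mul_pow_prime_pow_eq_one (hp : p.Prime) {k : ℕ} (hk : 1 ≤ k)
    (hpk : (p : T) ^ k = 0) (x : T) : (1 + (p : T) * x) ^ p ^ (k - 1) = 1 := by
  obtain ⟨y, hy⟩ := exists_one_add_mul_pow_prime_pow hp x (k - 1)
  rw [hy, Nat.sub_add_cancel hk, hpk, zero_mul, add_zero]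

end

namespace Matrix

theorem exists_eq_smul_of_map_eq_zero {m n S : Type*} [CommRing S] {f : R →+* S} {c : R}
    (hf : RingHom.ker f = Ideal.span {c}) {M : Matrix m n R} (hM : M.map f = 0) :
    ∃ N : Matrix m n R, M = c • N := by
  have hdvd : ∀ i j, c ∣ M i j := fun i j => by
    rw [← Ideal.mem_span_singleton, ← hf, RingHom.mem_ker]
    exact congrFun (congrFun hM i) j
  choose N hN using hdvd
  exact ⟨of N, by ext i j; exact hN i j⟩

theorem transpose_mul_mul_of_mul_one_add_smul {A B E X : Matrix ι ι R} {d : R}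
    (hA : Aᵀ * B * A = B + d • E) :
    (A * (1 + d • X))ᵀ * B * (A * (1 + d • X)) =
      B + d • (E + B * X + Xᵀ * B) + (d * d) • (E * X + Xᵀ * E + Xᵀ * B * X + d • (Xᵀ * E * X)) := by
  have hexpand : (A * (1 + d • X))ᵀ * B * (A * (1 + d • X)) =
      (1 + d • Xᵀ) * (Aᵀ * B * A) * (1 + d • X) := by
    simp only [transpose_mul, transpose_add, transpose_one, transpose_smul, Matrix.mul_assoc]
  rw [hexpand, hA]
  simp only [mul_add, add_mul, smul_mul_assoc, mul_smul_comm, mul_one, one_mul,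
    Matrix.mul_assoc]
  module

theorem exists_transpose_mul_mul_mul_one_add_smul_eq {A B E : Matrix ι ι R} {d : R}
    (hB : B.IsSymm) (hdet : IsUnit B.det) (h2 : IsUnit (2 : R)) (hA : Aᵀ * B * A = B + d • E) :
    ∃ X E', (A * (1 + d • X))ᵀ * B * (A * (1 + d • X)) = B + (d * d) • E' := by
  obtain ⟨u, hu⟩ := h2.exists_right_inv
  set X := -(u • (B⁻¹ * E))
  have hdE : d • E = Aᵀ * B * A - B := by rw [hA, add_sub_cancel_left]
  have hsymm : d • Eᵀ = d • E := by
    rw [← transpose_smul, hdE]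
    simp only [transpose_sub, transpose_mul, transpose_transpose, hB.eq, Matrix.mul_assoc]
  have hBX : B * X = -(u • E) := by
    rw [Matrix.mul_neg, Matrix.mul_smul, ← Matrix.mul_assoc, mul_nonsing_inv B hdet,
      Matrix.one_mul]
  have hXB : Xᵀ * B = -(u • Eᵀ) := by
    rw [transpose_neg, transpose_smul, transpose_mul, transpose_nonsing_inv, hB.eq,
      Matrix.neg_mul, Matrix.smul_mul, Matrix.mul_assoc, nonsing_inv_mul B hdet, Matrix.mul_one]
  have hfirst : d • (E + B * X + Xᵀ * B) = 0 := by
    rw [hBX, hXB, smul_add, smul_add, smul_neg, smul_neg, smul_comm d u Eᵀ, hsymm, smul_comm d u,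
      show d • E + -(u • d • E) + -(u • d • E) = (1 - 2 * u) • d • E by module, hu, sub_self,
      zero_smul]
  exact ⟨X, _, (transpose_mul_mul_of_mul_one_add_smul hA).trans (by rw [hfirst, add_zero])⟩

theorem exists_lift_transpose_mul_mul_eq {S : Type*} [CommRing S] {f : R →+* S}
    (hf : Function.Surjective f) {c : R} (hker : RingHom.ker f = Ideal.span {c})
    (hc : IsNilpotent c) {B : Matrix ι ι R} (hB : B.IsSymm) (hdet : IsUnit B.det)
    (h2 : IsUnit (2 : R)) {A₀ : Matrix ι ι S} (hA₀ : A₀ᵀ * B.map f * A₀ = B.map f) :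
    ∃ A : Matrix ι ι R, A.map f = A₀ ∧ Aᵀ * B * A = B := by
  obtain ⟨k, hk⟩ := hc
  have hfc : f c = 0 := by rw [← RingHom.mem_ker, hker]; exact Ideal.mem_span_singleton_self c
  have approx : ∀ j, ∃ A E : Matrix ι ι R, A.map f = A₀ ∧ Aᵀ * B * A = B + c ^ (j + 1) • E := by
    intro j
    induction j with
    | zero =>
      obtain ⟨A, hA⟩ : ∃ A : Matrix ι ι R, A.map f = A₀ :=
        ⟨A₀.map (Function.surjInv hf), by ext; simp [Function.surjInv_eq hf]⟩
      have herr : (Aᵀ * B * A - B).map f = 0 := by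
        rw [Matrix.map_sub _ (map_sub f), Matrix.map_mul, Matrix.map_mul, transpose_map, hA, hA₀,
          sub_self]
      obtain ⟨E, hE⟩ := exists_eq_smul_of_map_eq_zero hker herr
      exact ⟨A, E, hA, by rw [zero_add, pow_one, ← hE, add_sub_cancel]⟩
    | succ j ih =>
      obtain ⟨A, E, hAf, hA⟩ := ih
      obtain ⟨X, E', hX⟩ := exists_transpose_mul_mul_mul_one_add_smul_eq hB hdet h2 hA
      have hunip : (1 + c ^ (j + 1) • X).map f = 1 := by
        ext i l
        simp [Matrix.one_apply, hfc, apply_ite f]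
      refine ⟨A * (1 + c ^ (j + 1) • X), c ^ j • E', ?_, ?_⟩
      · rw [Matrix.map_mul, hunip, Matrix.mul_one, hAf]
      · rw [hX, smul_smul, ← pow_add, ← pow_add, show j + 1 + (j + 1) = j + 1 + 1 + j by omega]
  obtain ⟨A, E, hAf, hA⟩ := approx k
  exact ⟨A, hAf, by rw [hA, pow_succ, hk, zero_mul, zero_smul, add_zero]⟩

end Matrix

namespace OGroup

variable {S : Type*} [CommRing S]

def map (f : R →+* S) (B : Matrix ι ι R) : OGroup B →* OGroup (B.map f) :=
  MonoidHom.codRestrict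
    ((Units.map (f.mapMatrix : Matrix ι ι R →+* Matrix ι ι S).toMonoidHom).comp (OGroup B).subtype)
    (OGroup (B.map f)) (fun x => mem_OGroup_map f B x x.2)

theorem val_map (f : R →+* S) (B : Matrix ι ι R) (g : OGroup B) :
    ((OGroup.map f B g : (Matrix ι ι S)ˣ) : Matrix ι ι S) =
      ((g : (Matrix ι ι R)ˣ) : Matrix ι ι R).map f := rfl

theorem isPGroup_ker_map {p k : ℕ} (hp : p.Prime) (hk : 1 ≤ k) {f : R →+* S}
    (hf : RingHom.ker f = Ideal.span {(p : R)}) (hpk : (p : R) ^ k = 0) (B : Matrix ι ι R) :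
    IsPGroup p (OGroup.map f B).ker := by
  rintro ⟨g, hg⟩
  refine ⟨k - 1, Subtype.ext (Subtype.ext (Units.ext ?_))⟩
  have hg1 : (((g : (Matrix ι ι R)ˣ) : Matrix ι ι R) - 1).map f = 0 := by
    rw [Matrix.map_sub _ (map_sub f), Matrix.map_one f (map_zero f) (map_one f), ← val_map,
      MonoidHom.mem_ker.mp hg]
    exact sub_self _
  obtain ⟨N, hN⟩ := Matrix.exists_eq_smul_of_map_eq_zero hf hg1
  have hpk' : (p : Matrix ι ι R) ^ k = 0 := by
    rw [← map_natCast (algebraMap R (Matrix ι ι R)), ← map_pow, hpk, map_zero]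
  have hgN : ((g : (Matrix ι ι R)ˣ) : Matrix ι ι R) = 1 + (p : Matrix ι ι R) * N := by
    rw [← nsmul_eq_mul, ← Nat.cast_smul_eq_nsmul R, ← hN, add_sub_cancel]
  simp only [SubgroupClass.coe_pow, Units.val_pow_eq_pow_val, OneMemClass.coe_one, Units.val_one]
  rw [hgN]
  exact one_add_mul_pow_prime_pow_eq_one hp hk hpk' N

theorem map_surjective {f : R →+* S} (hf : Function.Surjective f) {c : R}
    (hker : RingHom.ker f = Ideal.span {c}) (hc : IsNilpotent c) {B : Matrix ι ι R}
    (hB : B.IsSymm) (hdet : IsUnit B.det) (h2 : IsUnit (2 : R)) :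
    Function.Surjective (OGroup.map f B) := by
  intro t
  obtain ⟨A, hAf, hA⟩ := Matrix.exists_lift_transpose_mul_mul_eq hf hker hc hB hdet h2 t.2
  have hleft : (B⁻¹ * Aᵀ * B) * A = 1 := by
    rw [Matrix.mul_assoc, Matrix.mul_assoc, ← Matrix.mul_assoc Aᵀ, hA, nonsing_inv_mul B hdet]
  obtain ⟨U, rfl⟩ := (Matrix.isUnit_iff_isUnit_det A).mpr (Matrix.isUnit_det_of_left_inverse hleft)
  exact ⟨⟨U, hA⟩, Subtype.ext (Units.ext hAf)⟩

end OGroup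

theorem redPi_eq_map (p k : ℕ) (hk : k ≠ 0) {n : ℕ} (B : Matrix (Fin n) (Fin n) (ZMod (p ^ k))) :
    redPi p k hk B = OGroup.map (ZMod.castHom (dvd_pow_self p hk) (ZMod p)) B := rfl

theorem stmt9 (p q : ℕ) (hp : p.Prime) (hq : q.Prime) (hp2 : p ≠ 2)
    (hpq : p ≠ q) (k : ℕ) (hk : 1 ≤ k) (n : ℕ)
    (B : Matrix (Fin n) (Fin n) (ZMod (p ^ k))) (hsymm : B.IsSymm) (hdet : IsUnit B.det) :
    ∀ S : Sylow q (OGroup B),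
      Set.InjOn (redPi p k (by omega) B) (S : Subgroup (OGroup B)) ∧
      ∃ T : Sylow q (OGroup (B.map (ZMod.castHom (dvd_pow_self p (by omega : k ≠ 0)) (ZMod p)))),
        (T : Subgroup _) = Subgroup.map (redPi p k (by omega) B) (S : Subgroup (OGroup B)) := by
  have : Fact p.Prime := ⟨hp⟩
  have : Fact q.Prime := ⟨hq⟩
  intro S
  have hker := ZMod.ker_castHom (dvd_pow_self p (by omega : k ≠ 0))
  have hpk : (p : ZMod (p ^ k)) ^ k = 0 := by rw [← Nat.cast_pow, ZMod.natCast_self]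
  have h2 : IsUnit (2 : ZMod (p ^ k)) := by
    rw [← Nat.cast_two, ZMod.isUnit_iff_coprime]
    exact ((Nat.coprime_primes Nat.prime_two hp).mpr hp2.symm).pow_right k
  have hsurj : Function.Surjective (redPi p k (by omega) B) := by
    rw [redPi_eq_map]
    exact OGroup.map_surjective (ZMod.castHom_surjective _) hker ⟨k, hpk⟩ hsymm hdet h2
  have hdisj : Disjoint (redPi p k (by omega) B).ker S := by
    rw [redPi_eq_map]
    exact IsPGroup.disjoint_of_ne p q hpq _ _ (OGroup.isPGroup_ker_map hp hk hker hpk B) S.isPGroup'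
  refine ⟨(Set.injOn_iff_map_eq_one _ _).mpr fun g hg hg1 => ?_, S.mapSurjective hsurj,
    S.coe_mapSurjective hsurj⟩
  exact Subgroup.disjoint_def.mp hdisj hg1 hg
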